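/- The convex pentagon with vertices (0,0),(3,0),(5,2),(4,3),(3,3), i.e. the convex hull of {(0,0),(3,0),(5,2),(4,3),(3,3)} in ℝ², is a tangram. -/

import Mathlib

set_option maxHeartbeats 1000000
noncomputable section

/-- The Euclidean plane ℝ². -/
abbrev Plane : Type := EuclideanSpace ℝ (Fin 2)

/-- The point (x, y) of the Euclidean plane. -/
def pt (x y : ℝ) : Plane := (WithLp.equiv 2 (Fin 2 → ℝ)).symm ![x, y]

/-- The seven tans: two small triangles, one medium triangle, two large triangles,
the square and the parallelogram. -/
def tanPiece : Fin 7 → Set Plane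
  | 0 => convexHull ℝ {pt 0 0, pt 1 0, pt 0 1}
  | 1 => convexHull ℝ {pt 0 0, pt 1 0, pt 0 1}
  | 2 => convexHull ℝ {pt 0 0, pt (Real.sqrt 2) 0, pt 0 (Real.sqrt 2)}
  | 3 => convexHull ℝ {pt 0 0, pt 2 0, pt 0 2}
  | 4 => convexHull ℝ {pt 0 0, pt 2 0, pt 0 2}
  | 5 => convexHull ℝ {pt 0 0, pt 1 0, pt 1 1, pt 0 1}
  | 6 => convexHull ℝ {pt 0 0, pt 1 0, pt 2 1, pt 1 1}

/-- A set `T ⊆ ℝ²` is a tangram if there are isometries `g 0, …, g 6` of the plane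
such that `T` is the union of the images `g i '' tanPiece i` and these images have
pairwise disjoint interiors. -/
def IsTangram (T : Set Plane) : Prop :=
  ∃ g : Fin 7 → (Plane ≃ᵢ Plane),
    T = ⋃ i, (g i) '' tanPiece i ∧
    Pairwise fun i j =>
      Disjoint (interior ((g i) '' tanPiece i)) (interior ((g j) '' tanPiece j))

@[simp] lemma pt_apply0 (x y : ℝ) : pt x y 0 = x := rfl
@[simp] lemma pt_apply1 (x y : ℝ) : pt x y 1 = y := rfl

lemma plane_ext {p q : Plane} (h0 : p 0 = q 0) (h1 : p 1 = q 1) : p = q := by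
  refine PiLp.ext fun i => ?_
  fin_cases i <;> assumption

@[simp] lemma plane_add_apply (p q : Plane) (i : Fin 2) : (p + q) i = p i + q i := rfl
@[simp] lemma plane_smul_apply (a : ℝ) (p : Plane) (i : Fin 2) : (a • p) i = a * p i := rfl

lemma dist_pt (p q : Plane) :
    dist p q = Real.sqrt ((p 0 - q 0)^2 + (p 1 - q 1)^2) := by
  rw [EuclideanSpace.dist_eq, Fin.sum_univ_two]
  simp [Real.dist_eq, sq_abs]

def mkIso (a b c d s t : ℝ) (h1 : a^2+c^2 = 1) (h2 : b^2+d^2 = 1) (h3 : a*b+c*d = 0)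
    (h4 : a^2+b^2 = 1) (h5 : c^2+d^2 = 1) (h6 : a*c+b*d = 0) : Plane ≃ᵢ Plane where
  toFun p := pt (a * p 0 + b * p 1 + s) (c * p 0 + d * p 1 + t)
  invFun q := pt (a * (q 0 - s) + c * (q 1 - t)) (b * (q 0 - s) + d * (q 1 - t))
  left_inv p := by
    apply plane_ext <;> simp
    · linear_combination (p 0) * h1 + (p 1) * h3
    · linear_combination (p 0) * h3 + (p 1) * h2
  right_inv q := by
    apply plane_ext <;> simp
    · linear_combination (q 0 - s) * h4 + (q 1 - t) * h6
    · linear_combination (q 0 - s) * h6 + (q 1 - t) * h5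
  isometry_toFun := Isometry.of_dist_eq fun p q => by
    rw [dist_pt, dist_pt]
    congr 1
    simp only [pt_apply0, pt_apply1]
    linear_combination (p 0 - q 0)^2 * h1 + (p 1 - q 1)^2 * h2 + (2*(p 0 - q 0)*(p 1 - q 1)) * h3

lemma mkIso_apply (a b c d s t : ℝ) (h1 h2 h3 h4 h5 h6) (p : Plane) :
    mkIso a b c d s t h1 h2 h3 h4 h5 h6 p
      = pt (a * p 0 + b * p 1 + s) (c * p 0 + d * p 1 + t) := rfl

lemma iso_image_hull (g : Plane ≃ᵢ Plane) (S : Set Plane) :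
    g '' convexHull ℝ S = convexHull ℝ (g '' S) := by
  have h : ⇑g = ⇑(g.toRealAffineIsometryEquiv.toAffineEquiv.toAffineMap) := by
    ext p
    simp [IsometryEquiv.coeFn_toRealAffineIsometryEquiv]
  rw [h, AffineMap.image_convexHull]

lemma mem_tri (v1 v2 v3 p : Plane) (a b c : ℝ) (ha : 0 ≤ a) (hb : 0 ≤ b) (hc : 0 ≤ c)
    (hs : a + b + c = 1) (hp : p = a • v1 + b • v2 + c • v3) :
    p ∈ convexHull ℝ {v1, v2, v3} := by
  have := Finset.centerMass_mem_convexHull (Finset.univ : Finset (Fin 3))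
    (w := ![a,b,c]) (z := ![v1,v2,v3]) (s := {v1,v2,v3})
    (by intro i _; fin_cases i <;> simpa) (by simp [Fin.sum_univ_three]; linarith)
    (by intro i _; fin_cases i <;> simp)
  rw [Finset.centerMass_eq_of_sum_1, Fin.sum_univ_three] at this
  · simpa [← hp] using this
  · simp [Fin.sum_univ_three]; linarith

lemma mem_quad (v1 v2 v3 v4 p : Plane) (a b c d : ℝ) (ha : 0 ≤ a) (hb : 0 ≤ b) (hc : 0 ≤ c)
    (hd : 0 ≤ d) (hs : a + b + c + d = 1) (hp : p = a • v1 + b • v2 + c • v3 + d • v4) :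
    p ∈ convexHull ℝ {v1, v2, v3, v4} := by
  have := Finset.centerMass_mem_convexHull (Finset.univ : Finset (Fin 4))
    (w := ![a,b,c,d]) (z := ![v1,v2,v3,v4]) (s := {v1,v2,v3,v4})
    (by intro i _; fin_cases i <;> simpa) (by simp [Fin.sum_univ_four]; linarith)
    (by intro i _; fin_cases i <;> simp)
  rw [Finset.centerMass_eq_of_sum_1, Fin.sum_univ_four] at this
  · simpa [← hp] using this
  · simp [Fin.sum_univ_four]; linarith

lemma convex_hp (c0 c1 c : ℝ) : Convex ℝ {p : Plane | c0 * p 0 + c1 * p 1 ≤ c} := by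
  have : IsLinearMap ℝ (fun p : Plane => c0 * p 0 + c1 * p 1) := by
    constructor <;> intros <;> simp <;> ring
  exact convex_halfSpace_le this c

lemma convex_hp' (c0 c1 c : ℝ) : Convex ℝ {p : Plane | c ≤ c0 * p 0 + c1 * p 1} := by
  have : IsLinearMap ℝ (fun p : Plane => c0 * p 0 + c1 * p 1) := by
    constructor <;> intros <;> simp <;> ring
  exact convex_halfSpace_ge this c

lemma disjoint_of_sep (c0 c1 c : ℝ) (hc : 0 < c0^2 + c1^2) (A B : Set Plane)
    (hA : A ⊆ {p | c0 * p 0 + c1 * p 1 ≤ c}) (hB : B ⊆ {p | c ≤ c0 * p 0 + c1 * p 1}) :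
    Disjoint (interior A) (interior B) := by
  rw [Set.disjoint_left]
  intro p hpA hpB
  have hAp : c0 * p 0 + c1 * p 1 ≤ c := hA (interior_subset hpA)
  have hBp : c ≤ c0 * p 0 + c1 * p 1 := hB (interior_subset hpB)
  rcases Metric.mem_nhds_iff.mp (mem_interior_iff_mem_nhds.mp hpA) with ⟨ε, hε, hball⟩
  set u : Plane := pt c0 c1 with hu
  have hnu : ‖u‖ = Real.sqrt (c0^2 + c1^2) := by
    have := dist_pt u 0
    simpa [dist_eq_norm, hu] using this
  set δ : ℝ := ε / (2 * (‖u‖ + 1)) with hδ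
  have hδpos : 0 < δ := by positivity
  have hq : p + δ • u ∈ Metric.ball p ε := by
    rw [Metric.mem_ball, dist_eq_norm]
    have : p + δ • u - p = δ • u := by abel
    rw [this, norm_smul, Real.norm_eq_abs, abs_of_pos hδpos]
    have h1 : ‖u‖ < 2 * (‖u‖ + 1) := by nlinarith [norm_nonneg u]
    calc δ * ‖u‖ < δ * (2 * (‖u‖ + 1)) := by
          rcases eq_or_lt_of_le (norm_nonneg u) with h | h
          · nlinarith
          · nlinarith
      _ = ε := by rw [hδ]; exact div_mul_cancel₀ _ (by positivity)
  have hmem := hA (hball hq)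
  simp only [Set.mem_setOf_eq, plane_add_apply, plane_smul_apply, pt_apply0, pt_apply1, hu] at hmem
  nlinarith


def gfun : Fin 7 → (Plane ≃ᵢ Plane)
  | 0 => mkIso 1 0 0 1 2 1 (by norm_num) (by norm_num) (by norm_num) (by norm_num) (by norm_num) (by norm_num)
  | 1 => mkIso 0 (-1) (-1) 0 3 2 (by norm_num) (by norm_num) (by norm_num) (by norm_num) (by norm_num) (by norm_num)
  | 2 => mkIso (-(Real.sqrt 2/2)) (Real.sqrt 2/2) (-(Real.sqrt 2/2)) (-(Real.sqrt 2/2)) 4 3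
      (by linear_combination (1/2) * Real.sq_sqrt (by norm_num : (0:ℝ) ≤ 2))
      (by linear_combination (1/2) * Real.sq_sqrt (by norm_num : (0:ℝ) ≤ 2))
      (by ring)
      (by linear_combination (1/2) * Real.sq_sqrt (by norm_num : (0:ℝ) ≤ 2))
      (by linear_combination (1/2) * Real.sq_sqrt (by norm_num : (0:ℝ) ≤ 2))
      (by ring)
  | 3 => mkIso (-1) 0 0 1 2 0 (by norm_num) (by norm_num) (by norm_num) (by norm_num) (by norm_num) (by norm_num)
  | 4 => mkIso 0 1 (-1) 0 3 2 (by norm_num) (by norm_num) (by norm_num) (by norm_num) (by norm_num) (by norm_num)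
  | 5 => mkIso 1 0 0 1 2 0 (by norm_num) (by norm_num) (by norm_num) (by norm_num) (by norm_num) (by norm_num)
  | 6 => mkIso 1 0 0 1 2 2 (by norm_num) (by norm_num) (by norm_num) (by norm_num) (by norm_num) (by norm_num)

lemma sqrt2_mul : Real.sqrt 2 * Real.sqrt 2 = 2 := Real.mul_self_sqrt (by norm_num)

lemma img0 : gfun 0 '' tanPiece 0 = convexHull ℝ {pt 2 1, pt 3 1, pt 2 2} := by
  have h : tanPiece 0 = convexHull ℝ {pt 0 0, pt 1 0, pt 0 1} := rfl
  rw [h, iso_image_hull, Set.image_insert_eq, Set.image_insert_eq, Set.image_singleton]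
  have e0 : gfun 0 (pt 0 0) = pt 2 1 := by apply plane_ext <;> simp [gfun, mkIso_apply] <;> norm_num
  have e1 : gfun 0 (pt 1 0) = pt 3 1 := by apply plane_ext <;> simp [gfun, mkIso_apply] <;> norm_num
  have e2 : gfun 0 (pt 0 1) = pt 2 2 := by apply plane_ext <;> simp [gfun, mkIso_apply] <;> norm_num
  rw [e0, e1, e2]

lemma img1 : gfun 1 '' tanPiece 1 = convexHull ℝ {pt 3 2, pt 3 1, pt 2 2} := by
  have h : tanPiece 1 = convexHull ℝ {pt 0 0, pt 1 0, pt 0 1} := rfl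
  rw [h, iso_image_hull, Set.image_insert_eq, Set.image_insert_eq, Set.image_singleton]
  have e0 : gfun 1 (pt 0 0) = pt 3 2 := by apply plane_ext <;> simp [gfun, mkIso_apply] <;> norm_num
  have e1 : gfun 1 (pt 1 0) = pt 3 1 := by apply plane_ext <;> simp [gfun, mkIso_apply] <;> norm_num
  have e2 : gfun 1 (pt 0 1) = pt 2 2 := by apply plane_ext <;> simp [gfun, mkIso_apply] <;> norm_num
  rw [e0, e1, e2]

lemma img2 : gfun 2 '' tanPiece 2 = convexHull ℝ {pt 4 3, pt 3 2, pt 5 2} := by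
  have h : tanPiece 2 = convexHull ℝ {pt 0 0, pt (Real.sqrt 2) 0, pt 0 (Real.sqrt 2)} := rfl
  rw [h, iso_image_hull, Set.image_insert_eq, Set.image_insert_eq, Set.image_singleton]
  have e0 : gfun 2 (pt 0 0) = pt 4 3 := by apply plane_ext <;> simp [gfun, mkIso_apply] <;> linarith [sqrt2_mul]
  have e1 : gfun 2 (pt (Real.sqrt 2) 0) = pt 3 2 := by apply plane_ext <;> simp [gfun, mkIso_apply] <;> linarith [sqrt2_mul]
  have e2 : gfun 2 (pt 0 (Real.sqrt 2)) = pt 5 2 := by apply plane_ext <;> simp [gfun, mkIso_apply] <;> linarith [sqrt2_mul]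
  rw [e0, e1, e2]

lemma img3 : gfun 3 '' tanPiece 3 = convexHull ℝ {pt 2 0, pt 0 0, pt 2 2} := by
  have h : tanPiece 3 = convexHull ℝ {pt 0 0, pt 2 0, pt 0 2} := rfl
  rw [h, iso_image_hull, Set.image_insert_eq, Set.image_insert_eq, Set.image_singleton]
  have e0 : gfun 3 (pt 0 0) = pt 2 0 := by apply plane_ext <;> simp [gfun, mkIso_apply] <;> norm_num
  have e1 : gfun 3 (pt 2 0) = pt 0 0 := by apply plane_ext <;> simp [gfun, mkIso_apply] <;> norm_num
  have e2 : gfun 3 (pt 0 2) = pt 2 2 := by apply plane_ext <;> simp [gfun, mkIso_apply] <;> norm_num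
  rw [e0, e1, e2]

lemma img4 : gfun 4 '' tanPiece 4 = convexHull ℝ {pt 3 2, pt 3 0, pt 5 2} := by
  have h : tanPiece 4 = convexHull ℝ {pt 0 0, pt 2 0, pt 0 2} := rfl
  rw [h, iso_image_hull, Set.image_insert_eq, Set.image_insert_eq, Set.image_singleton]
  have e0 : gfun 4 (pt 0 0) = pt 3 2 := by apply plane_ext <;> simp [gfun, mkIso_apply] <;> norm_num
  have e1 : gfun 4 (pt 2 0) = pt 3 0 := by apply plane_ext <;> simp [gfun, mkIso_apply] <;> norm_num
  have e2 : gfun 4 (pt 0 2) = pt 5 2 := by apply plane_ext <;> simp [gfun, mkIso_apply] <;> norm_num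
  rw [e0, e1, e2]

lemma img5 : gfun 5 '' tanPiece 5 = convexHull ℝ {pt 2 0, pt 3 0, pt 3 1, pt 2 1} := by
  have h : tanPiece 5 = convexHull ℝ {pt 0 0, pt 1 0, pt 1 1, pt 0 1} := rfl
  rw [h, iso_image_hull, Set.image_insert_eq, Set.image_insert_eq, Set.image_insert_eq, Set.image_singleton]
  have e0 : gfun 5 (pt 0 0) = pt 2 0 := by apply plane_ext <;> simp [gfun, mkIso_apply] <;> norm_num
  have e1 : gfun 5 (pt 1 0) = pt 3 0 := by apply plane_ext <;> simp [gfun, mkIso_apply] <;> norm_num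
  have e2 : gfun 5 (pt 1 1) = pt 3 1 := by apply plane_ext <;> simp [gfun, mkIso_apply] <;> norm_num
  have e3 : gfun 5 (pt 0 1) = pt 2 1 := by apply plane_ext <;> simp [gfun, mkIso_apply] <;> norm_num
  rw [e0, e1, e2, e3]

lemma img6 : gfun 6 '' tanPiece 6 = convexHull ℝ {pt 2 2, pt 3 2, pt 4 3, pt 3 3} := by
  have h : tanPiece 6 = convexHull ℝ {pt 0 0, pt 1 0, pt 2 1, pt 1 1} := rfl
  rw [h, iso_image_hull, Set.image_insert_eq, Set.image_insert_eq, Set.image_insert_eq, Set.image_singleton]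
  have e0 : gfun 6 (pt 0 0) = pt 2 2 := by apply plane_ext <;> simp [gfun, mkIso_apply] <;> norm_num
  have e1 : gfun 6 (pt 1 0) = pt 3 2 := by apply plane_ext <;> simp [gfun, mkIso_apply] <;> norm_num
  have e2 : gfun 6 (pt 2 1) = pt 4 3 := by apply plane_ext <;> simp [gfun, mkIso_apply] <;> norm_num
  have e3 : gfun 6 (pt 1 1) = pt 3 3 := by apply plane_ext <;> simp [gfun, mkIso_apply] <;> norm_num
  rw [e0, e1, e2, e3]


lemma pent_mem (x y a b c : ℝ) (ha : 0 ≤ a) (hb : 0 ≤ b) (hc : 0 ≤ c) (hs : a + b + c = 1)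
    (hx : 3*b + 3*c = x) (hy : 3*c = y) :
    pt x y ∈ convexHull ℝ {pt 0 0, pt 3 0, pt 5 2, pt 4 3, pt 3 3} := by
  have hsub : ({pt 0 0, pt 3 0, pt 3 3} : Set Plane) ⊆ {pt 0 0, pt 3 0, pt 5 2, pt 4 3, pt 3 3} := by
    intro z hz
    simp only [Set.mem_insert_iff, Set.mem_singleton_iff] at hz ⊢
    tauto
  refine convexHull_mono hsub ?_
  exact mem_tri _ _ _ _ a b c ha hb hc hs (by apply plane_ext <;> simp <;> linarith)

lemma tri_sub_le (c0 c1 c x1 y1 x2 y2 x3 y3 : ℝ)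
    (e1 : c0*x1+c1*y1 ≤ c) (e2 : c0*x2+c1*y2 ≤ c) (e3 : c0*x3+c1*y3 ≤ c) :
    convexHull ℝ {pt x1 y1, pt x2 y2, pt x3 y3} ⊆ {p : Plane | c0 * p 0 + c1 * p 1 ≤ c} := by
  refine convexHull_min ?_ (convex_hp c0 c1 c)
  intro v hv
  simp only [Set.mem_insert_iff, Set.mem_singleton_iff] at hv
  rcases hv with rfl | rfl | rfl <;> simpa

lemma tri_sub_ge (c0 c1 c x1 y1 x2 y2 x3 y3 : ℝ)
    (e1 : c ≤ c0*x1+c1*y1) (e2 : c ≤ c0*x2+c1*y2) (e3 : c ≤ c0*x3+c1*y3) :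
    convexHull ℝ {pt x1 y1, pt x2 y2, pt x3 y3} ⊆ {p : Plane | c ≤ c0 * p 0 + c1 * p 1} := by
  refine convexHull_min ?_ (convex_hp' c0 c1 c)
  intro v hv
  simp only [Set.mem_insert_iff, Set.mem_singleton_iff] at hv
  rcases hv with rfl | rfl | rfl <;> simpa

lemma quad_sub_le (c0 c1 c x1 y1 x2 y2 x3 y3 x4 y4 : ℝ)
    (e1 : c0*x1+c1*y1 ≤ c) (e2 : c0*x2+c1*y2 ≤ c) (e3 : c0*x3+c1*y3 ≤ c) (e4 : c0*x4+c1*y4 ≤ c) :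
    convexHull ℝ {pt x1 y1, pt x2 y2, pt x3 y3, pt x4 y4} ⊆ {p : Plane | c0 * p 0 + c1 * p 1 ≤ c} := by
  refine convexHull_min ?_ (convex_hp c0 c1 c)
  intro v hv
  simp only [Set.mem_insert_iff, Set.mem_singleton_iff] at hv
  rcases hv with rfl | rfl | rfl | rfl <;> simpa

lemma quad_sub_ge (c0 c1 c x1 y1 x2 y2 x3 y3 x4 y4 : ℝ)
    (e1 : c ≤ c0*x1+c1*y1) (e2 : c ≤ c0*x2+c1*y2) (e3 : c ≤ c0*x3+c1*y3) (e4 : c ≤ c0*x4+c1*y4) :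
    convexHull ℝ {pt x1 y1, pt x2 y2, pt x3 y3, pt x4 y4} ⊆ {p : Plane | c ≤ c0 * p 0 + c1 * p 1} := by
  refine convexHull_min ?_ (convex_hp' c0 c1 c)
  intro v hv
  simp only [Set.mem_insert_iff, Set.mem_singleton_iff] at hv
  rcases hv with rfl | rfl | rfl | rfl <;> simpa

lemma convexQ : Convex ℝ {p : Plane | 0 ≤ p 1 ∧ p 1 ≤ p 0 ∧ p 0 ≤ p 1 + 3 ∧ p 0 + p 1 ≤ 7 ∧ p 1 ≤ 3} := by
  intro x hx y hy a b ha hb hab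
  obtain ⟨hx1, hx2, hx3, hx4, hx5⟩ := hx
  obtain ⟨hy1, hy2, hy3, hy4, hy5⟩ := hy
  simp only [Set.mem_setOf_eq, plane_add_apply, plane_smul_apply]
  refine ⟨by nlinarith [mul_nonneg ha hx1, mul_nonneg hb hy1], ?_, ?_, ?_, ?_⟩
  · nlinarith [mul_le_mul_of_nonneg_left hx2 ha, mul_le_mul_of_nonneg_left hy2 hb]
  · nlinarith [mul_le_mul_of_nonneg_left hx3 ha, mul_le_mul_of_nonneg_left hy3 hb]
  · nlinarith [mul_le_mul_of_nonneg_left hx4 ha, mul_le_mul_of_nonneg_left hy4 hb]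
  · nlinarith [mul_le_mul_of_nonneg_left hx5 ha, mul_le_mul_of_nonneg_left hy5 hb]

lemma sub0 : gfun 0 '' tanPiece 0 ⊆ convexHull ℝ {pt 0 0, pt 3 0, pt 5 2, pt 4 3, pt 3 3} := by
  rw [img0]
  refine convexHull_min ?_ (convex_convexHull ℝ _)
  intro v hv
  simp only [Set.mem_insert_iff, Set.mem_singleton_iff] at hv
  rcases hv with rfl | rfl | rfl
  · exact pent_mem 2 1 (1/3) (1/3) (1/3) (by norm_num) (by norm_num) (by norm_num) (by norm_num) (by norm_num) (by norm_num)
  · exact pent_mem 3 1 0 (2/3) (1/3) (by norm_num) (by norm_num) (by norm_num) (by norm_num) (by norm_num) (by norm_num)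
  · exact pent_mem 2 2 (1/3) 0 (2/3) (by norm_num) (by norm_num) (by norm_num) (by norm_num) (by norm_num) (by norm_num)

lemma sub1 : gfun 1 '' tanPiece 1 ⊆ convexHull ℝ {pt 0 0, pt 3 0, pt 5 2, pt 4 3, pt 3 3} := by
  rw [img1]
  refine convexHull_min ?_ (convex_convexHull ℝ _)
  intro v hv
  simp only [Set.mem_insert_iff, Set.mem_singleton_iff] at hv
  rcases hv with rfl | rfl | rfl
  · exact pent_mem 3 2 0 (1/3) (2/3) (by norm_num) (by norm_num) (by norm_num) (by norm_num) (by norm_num) (by norm_num)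
  · exact pent_mem 3 1 0 (2/3) (1/3) (by norm_num) (by norm_num) (by norm_num) (by norm_num) (by norm_num) (by norm_num)
  · exact pent_mem 2 2 (1/3) 0 (2/3) (by norm_num) (by norm_num) (by norm_num) (by norm_num) (by norm_num) (by norm_num)

lemma sub2 : gfun 2 '' tanPiece 2 ⊆ convexHull ℝ {pt 0 0, pt 3 0, pt 5 2, pt 4 3, pt 3 3} := by
  rw [img2]
  refine convexHull_min ?_ (convex_convexHull ℝ _)
  intro v hv
  simp only [Set.mem_insert_iff, Set.mem_singleton_iff] at hv
  rcases hv with rfl | rfl | rfl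
  · exact subset_convexHull ℝ _ (by simp)
  · exact pent_mem 3 2 0 (1/3) (2/3) (by norm_num) (by norm_num) (by norm_num) (by norm_num) (by norm_num) (by norm_num)
  · exact subset_convexHull ℝ _ (by simp)

lemma sub3 : gfun 3 '' tanPiece 3 ⊆ convexHull ℝ {pt 0 0, pt 3 0, pt 5 2, pt 4 3, pt 3 3} := by
  rw [img3]
  refine convexHull_min ?_ (convex_convexHull ℝ _)
  intro v hv
  simp only [Set.mem_insert_iff, Set.mem_singleton_iff] at hv
  rcases hv with rfl | rfl | rfl
  · exact pent_mem 2 0 (1/3) (2/3) 0 (by norm_num) (by norm_num) (by norm_num) (by norm_num) (by norm_num) (by norm_num)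
  · exact pent_mem 0 0 1 0 0 (by norm_num) (by norm_num) (by norm_num) (by norm_num) (by norm_num) (by norm_num)
  · exact pent_mem 2 2 (1/3) 0 (2/3) (by norm_num) (by norm_num) (by norm_num) (by norm_num) (by norm_num) (by norm_num)

lemma sub4 : gfun 4 '' tanPiece 4 ⊆ convexHull ℝ {pt 0 0, pt 3 0, pt 5 2, pt 4 3, pt 3 3} := by
  rw [img4]
  refine convexHull_min ?_ (convex_convexHull ℝ _)
  intro v hv
  simp only [Set.mem_insert_iff, Set.mem_singleton_iff] at hv
  rcases hv with rfl | rfl | rfl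
  · exact pent_mem 3 2 0 (1/3) (2/3) (by norm_num) (by norm_num) (by norm_num) (by norm_num) (by norm_num) (by norm_num)
  · exact pent_mem 3 0 0 1 0 (by norm_num) (by norm_num) (by norm_num) (by norm_num) (by norm_num) (by norm_num)
  · exact subset_convexHull ℝ _ (by simp)

lemma sub5 : gfun 5 '' tanPiece 5 ⊆ convexHull ℝ {pt 0 0, pt 3 0, pt 5 2, pt 4 3, pt 3 3} := by
  rw [img5]
  refine convexHull_min ?_ (convex_convexHull ℝ _)
  intro v hv
  simp only [Set.mem_insert_iff, Set.mem_singleton_iff] at hv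
  rcases hv with rfl | rfl | rfl | rfl
  · exact pent_mem 2 0 (1/3) (2/3) 0 (by norm_num) (by norm_num) (by norm_num) (by norm_num) (by norm_num) (by norm_num)
  · exact pent_mem 3 0 0 1 0 (by norm_num) (by norm_num) (by norm_num) (by norm_num) (by norm_num) (by norm_num)
  · exact pent_mem 3 1 0 (2/3) (1/3) (by norm_num) (by norm_num) (by norm_num) (by norm_num) (by norm_num) (by norm_num)
  · exact pent_mem 2 1 (1/3) (1/3) (1/3) (by norm_num) (by norm_num) (by norm_num) (by norm_num) (by norm_num) (by norm_num)

lemma sub6 : gfun 6 '' tanPiece 6 ⊆ convexHull ℝ {pt 0 0, pt 3 0, pt 5 2, pt 4 3, pt 3 3} := by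
  rw [img6]
  refine convexHull_min ?_ (convex_convexHull ℝ _)
  intro v hv
  simp only [Set.mem_insert_iff, Set.mem_singleton_iff] at hv
  rcases hv with rfl | rfl | rfl | rfl
  · exact pent_mem 2 2 (1/3) 0 (2/3) (by norm_num) (by norm_num) (by norm_num) (by norm_num) (by norm_num) (by norm_num)
  · exact pent_mem 3 2 0 (1/3) (2/3) (by norm_num) (by norm_num) (by norm_num) (by norm_num) (by norm_num) (by norm_num)
  · exact subset_convexHull ℝ _ (by simp)
  · exact pent_mem 3 3 0 0 1 (by norm_num) (by norm_num) (by norm_num) (by norm_num) (by norm_num) (by norm_num)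

/-- The convex pentagon with vertices (0,0), (3,0), (5,2), (4,3), (3,3) is a tangram. -/
theorem convex_pentagon_two_is_tangram :
    IsTangram (convexHull ℝ {pt 0 0, pt 3 0, pt 5 2, pt 4 3, pt 3 3}) := by
  refine ⟨gfun, ?_, ?_⟩
  · apply Set.Subset.antisymm
    · intro p hp
      have hQ : 0 ≤ p 1 ∧ p 1 ≤ p 0 ∧ p 0 ≤ p 1 + 3 ∧ p 0 + p 1 ≤ 7 ∧ p 1 ≤ 3 := by
        refine convexHull_min ?_ convexQ hp
        intro v hv
        simp only [Set.mem_insert_iff, Set.mem_singleton_iff] at hv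
        rcases hv with rfl | rfl | rfl | rfl | rfl <;>
          refine ⟨by norm_num, by norm_num, by norm_num, by norm_num, by norm_num⟩
      obtain ⟨h1, h2, h3, h4, h5⟩ := hQ
      rcases le_total (p 0) 2 with hA | hA
      · refine Set.mem_iUnion.mpr ⟨3, ?_⟩
        rw [img3]
        exact mem_tri _ _ _ _ ((p 0 - p 1)/2) (1 - p 0/2) (p 1/2)
          (by linarith) (by linarith) (by linarith) (by ring)
          (by apply plane_ext <;> simp <;> ring)
      rcases le_total (p 1) 2 with hB | hB
      · rcases le_total (p 0) 3 with hC | hC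
        · rcases le_total (p 1) 1 with hD | hD
          · refine Set.mem_iUnion.mpr ⟨5, ?_⟩
            rw [img5]
            exact mem_quad _ _ _ _ _ ((3 - p 0)*(1 - p 1)) ((p 0 - 2)*(1 - p 1)) ((p 0 - 2)*(p 1)) ((3 - p 0)*(p 1))
              (by nlinarith) (by nlinarith) (by nlinarith) (by nlinarith) (by ring)
              (by apply plane_ext <;> simp <;> ring)
          · rcases le_total (p 0 + p 1) 4 with hE | hE
            · refine Set.mem_iUnion.mpr ⟨0, ?_⟩
              rw [img0]
              exact mem_tri _ _ _ _ (4 - p 0 - p 1) (p 0 - 2) (p 1 - 1)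
                (by linarith) (by linarith) (by linarith) (by ring)
                (by apply plane_ext <;> simp <;> ring)
            · refine Set.mem_iUnion.mpr ⟨1, ?_⟩
              rw [img1]
              exact mem_tri _ _ _ _ (p 0 + p 1 - 4) (2 - p 1) (3 - p 0)
                (by linarith) (by linarith) (by linarith) (by ring)
                (by apply plane_ext <;> simp <;> ring)
        · refine Set.mem_iUnion.mpr ⟨4, ?_⟩
          rw [img4]
          exact mem_tri _ _ _ _ ((p 1 + 3 - p 0)/2) ((2 - p 1)/2) ((p 0 - 3)/2)
            (by linarith) (by linarith) (by linarith) (by ring)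
            (by apply plane_ext <;> simp <;> ring)
      · rcases le_total (p 0) (p 1 + 1) with hC | hC
        · refine Set.mem_iUnion.mpr ⟨6, ?_⟩
          rw [img6]
          exact mem_quad _ _ _ _ _ ((1 - (p 0 - p 1))*(1 - (p 1 - 2))) ((p 0 - p 1)*(1 - (p 1 - 2))) ((p 0 - p 1)*(p 1 - 2)) ((1 - (p 0 - p 1))*(p 1 - 2))
            (by nlinarith) (by nlinarith) (by nlinarith) (by nlinarith) (by ring)
            (by apply plane_ext <;> simp <;> ring)
        · refine Set.mem_iUnion.mpr ⟨2, ?_⟩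
          rw [img2]
          exact mem_tri _ _ _ _ (p 1 - 2) ((7 - p 0 - p 1)/2) ((p 0 - p 1 - 1)/2)
            (by linarith) (by linarith) (by linarith) (by ring)
            (by apply plane_ext <;> simp <;> ring)
    · refine Set.iUnion_subset ?_
      intro i
      fin_cases i
      exacts [sub0, sub1, sub2, sub3, sub4, sub5, sub6]
  · intro i j hij
    have d01 : Disjoint (interior (gfun 0 '' tanPiece 0)) (interior (gfun 1 '' tanPiece 1)) := by
      rw [img0, img1]
      exact disjoint_of_sep (1) (1) (4) (by norm_num) _ _
        (tri_sub_le _ _ _ _ _ _ _ _ _ (by norm_num) (by norm_num) (by norm_num))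
        (tri_sub_ge _ _ _ _ _ _ _ _ _ (by norm_num) (by norm_num) (by norm_num))
    have d02 : Disjoint (interior (gfun 0 '' tanPiece 0)) (interior (gfun 2 '' tanPiece 2)) := by
      rw [img0, img2]
      exact disjoint_of_sep (0) (1) (2) (by norm_num) _ _
        (tri_sub_le _ _ _ _ _ _ _ _ _ (by norm_num) (by norm_num) (by norm_num))
        (tri_sub_ge _ _ _ _ _ _ _ _ _ (by norm_num) (by norm_num) (by norm_num))
    have d03 : Disjoint (interior (gfun 0 '' tanPiece 0)) (interior (gfun 3 '' tanPiece 3)) := by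
      rw [img0, img3]
      exact disjoint_of_sep (-1) (0) (-2) (by norm_num) _ _
        (tri_sub_le _ _ _ _ _ _ _ _ _ (by norm_num) (by norm_num) (by norm_num))
        (tri_sub_ge _ _ _ _ _ _ _ _ _ (by norm_num) (by norm_num) (by norm_num))
    have d04 : Disjoint (interior (gfun 0 '' tanPiece 0)) (interior (gfun 4 '' tanPiece 4)) := by
      rw [img0, img4]
      exact disjoint_of_sep (1) (0) (3) (by norm_num) _ _
        (tri_sub_le _ _ _ _ _ _ _ _ _ (by norm_num) (by norm_num) (by norm_num))
        (tri_sub_ge _ _ _ _ _ _ _ _ _ (by norm_num) (by norm_num) (by norm_num))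
    have d05 : Disjoint (interior (gfun 0 '' tanPiece 0)) (interior (gfun 5 '' tanPiece 5)) := by
      rw [img0, img5]
      exact disjoint_of_sep (0) (-1) (-1) (by norm_num) _ _
        (tri_sub_le _ _ _ _ _ _ _ _ _ (by norm_num) (by norm_num) (by norm_num))
        (quad_sub_ge _ _ _ _ _ _ _ _ _ _ _ (by norm_num) (by norm_num) (by norm_num) (by norm_num))
    have d06 : Disjoint (interior (gfun 0 '' tanPiece 0)) (interior (gfun 6 '' tanPiece 6)) := by
      rw [img0, img6]
      exact disjoint_of_sep (0) (1) (2) (by norm_num) _ _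
        (tri_sub_le _ _ _ _ _ _ _ _ _ (by norm_num) (by norm_num) (by norm_num))
        (quad_sub_ge _ _ _ _ _ _ _ _ _ _ _ (by norm_num) (by norm_num) (by norm_num) (by norm_num))
    have d12 : Disjoint (interior (gfun 1 '' tanPiece 1)) (interior (gfun 2 '' tanPiece 2)) := by
      rw [img1, img2]
      exact disjoint_of_sep (0) (1) (2) (by norm_num) _ _
        (tri_sub_le _ _ _ _ _ _ _ _ _ (by norm_num) (by norm_num) (by norm_num))
        (tri_sub_ge _ _ _ _ _ _ _ _ _ (by norm_num) (by norm_num) (by norm_num))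
    have d13 : Disjoint (interior (gfun 1 '' tanPiece 1)) (interior (gfun 3 '' tanPiece 3)) := by
      rw [img1, img3]
      exact disjoint_of_sep (-1) (0) (-2) (by norm_num) _ _
        (tri_sub_le _ _ _ _ _ _ _ _ _ (by norm_num) (by norm_num) (by norm_num))
        (tri_sub_ge _ _ _ _ _ _ _ _ _ (by norm_num) (by norm_num) (by norm_num))
    have d14 : Disjoint (interior (gfun 1 '' tanPiece 1)) (interior (gfun 4 '' tanPiece 4)) := by
      rw [img1, img4]
      exact disjoint_of_sep (1) (0) (3) (by norm_num) _ _
        (tri_sub_le _ _ _ _ _ _ _ _ _ (by norm_num) (by norm_num) (by norm_num))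
        (tri_sub_ge _ _ _ _ _ _ _ _ _ (by norm_num) (by norm_num) (by norm_num))
    have d15 : Disjoint (interior (gfun 1 '' tanPiece 1)) (interior (gfun 5 '' tanPiece 5)) := by
      rw [img1, img5]
      exact disjoint_of_sep (0) (-1) (-1) (by norm_num) _ _
        (tri_sub_le _ _ _ _ _ _ _ _ _ (by norm_num) (by norm_num) (by norm_num))
        (quad_sub_ge _ _ _ _ _ _ _ _ _ _ _ (by norm_num) (by norm_num) (by norm_num) (by norm_num))
    have d16 : Disjoint (interior (gfun 1 '' tanPiece 1)) (interior (gfun 6 '' tanPiece 6)) := by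
      rw [img1, img6]
      exact disjoint_of_sep (0) (1) (2) (by norm_num) _ _
        (tri_sub_le _ _ _ _ _ _ _ _ _ (by norm_num) (by norm_num) (by norm_num))
        (quad_sub_ge _ _ _ _ _ _ _ _ _ _ _ (by norm_num) (by norm_num) (by norm_num) (by norm_num))
    have d23 : Disjoint (interior (gfun 2 '' tanPiece 2)) (interior (gfun 3 '' tanPiece 3)) := by
      rw [img2, img3]
      exact disjoint_of_sep (0) (-1) (-2) (by norm_num) _ _
        (tri_sub_le _ _ _ _ _ _ _ _ _ (by norm_num) (by norm_num) (by norm_num))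
        (tri_sub_ge _ _ _ _ _ _ _ _ _ (by norm_num) (by norm_num) (by norm_num))
    have d24 : Disjoint (interior (gfun 2 '' tanPiece 2)) (interior (gfun 4 '' tanPiece 4)) := by
      rw [img2, img4]
      exact disjoint_of_sep (0) (-1) (-2) (by norm_num) _ _
        (tri_sub_le _ _ _ _ _ _ _ _ _ (by norm_num) (by norm_num) (by norm_num))
        (tri_sub_ge _ _ _ _ _ _ _ _ _ (by norm_num) (by norm_num) (by norm_num))
    have d25 : Disjoint (interior (gfun 2 '' tanPiece 2)) (interior (gfun 5 '' tanPiece 5)) := by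
      rw [img2, img5]
      exact disjoint_of_sep (0) (-1) (-2) (by norm_num) _ _
        (tri_sub_le _ _ _ _ _ _ _ _ _ (by norm_num) (by norm_num) (by norm_num))
        (quad_sub_ge _ _ _ _ _ _ _ _ _ _ _ (by norm_num) (by norm_num) (by norm_num) (by norm_num))
    have d26 : Disjoint (interior (gfun 2 '' tanPiece 2)) (interior (gfun 6 '' tanPiece 6)) := by
      rw [img2, img6]
      exact disjoint_of_sep (-1) (1) (-1) (by norm_num) _ _
        (tri_sub_le _ _ _ _ _ _ _ _ _ (by norm_num) (by norm_num) (by norm_num))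
        (quad_sub_ge _ _ _ _ _ _ _ _ _ _ _ (by norm_num) (by norm_num) (by norm_num) (by norm_num))
    have d34 : Disjoint (interior (gfun 3 '' tanPiece 3)) (interior (gfun 4 '' tanPiece 4)) := by
      rw [img3, img4]
      exact disjoint_of_sep (1) (0) (3) (by norm_num) _ _
        (tri_sub_le _ _ _ _ _ _ _ _ _ (by norm_num) (by norm_num) (by norm_num))
        (tri_sub_ge _ _ _ _ _ _ _ _ _ (by norm_num) (by norm_num) (by norm_num))
    have d35 : Disjoint (interior (gfun 3 '' tanPiece 3)) (interior (gfun 5 '' tanPiece 5)) := by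
      rw [img3, img5]
      exact disjoint_of_sep (1) (0) (2) (by norm_num) _ _
        (tri_sub_le _ _ _ _ _ _ _ _ _ (by norm_num) (by norm_num) (by norm_num))
        (quad_sub_ge _ _ _ _ _ _ _ _ _ _ _ (by norm_num) (by norm_num) (by norm_num) (by norm_num))
    have d36 : Disjoint (interior (gfun 3 '' tanPiece 3)) (interior (gfun 6 '' tanPiece 6)) := by
      rw [img3, img6]
      exact disjoint_of_sep (0) (1) (2) (by norm_num) _ _
        (tri_sub_le _ _ _ _ _ _ _ _ _ (by norm_num) (by norm_num) (by norm_num))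
        (quad_sub_ge _ _ _ _ _ _ _ _ _ _ _ (by norm_num) (by norm_num) (by norm_num) (by norm_num))
    have d45 : Disjoint (interior (gfun 4 '' tanPiece 4)) (interior (gfun 5 '' tanPiece 5)) := by
      rw [img4, img5]
      exact disjoint_of_sep (-1) (0) (-3) (by norm_num) _ _
        (tri_sub_le _ _ _ _ _ _ _ _ _ (by norm_num) (by norm_num) (by norm_num))
        (quad_sub_ge _ _ _ _ _ _ _ _ _ _ _ (by norm_num) (by norm_num) (by norm_num) (by norm_num))
    have d46 : Disjoint (interior (gfun 4 '' tanPiece 4)) (interior (gfun 6 '' tanPiece 6)) := by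
      rw [img4, img6]
      exact disjoint_of_sep (0) (1) (2) (by norm_num) _ _
        (tri_sub_le _ _ _ _ _ _ _ _ _ (by norm_num) (by norm_num) (by norm_num))
        (quad_sub_ge _ _ _ _ _ _ _ _ _ _ _ (by norm_num) (by norm_num) (by norm_num) (by norm_num))
    have d56 : Disjoint (interior (gfun 5 '' tanPiece 5)) (interior (gfun 6 '' tanPiece 6)) := by
      rw [img5, img6]
      exact disjoint_of_sep (0) (1) (2) (by norm_num) _ _
        (quad_sub_le _ _ _ _ _ _ _ _ _ _ _ (by norm_num) (by norm_num) (by norm_num) (by norm_num))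
        (quad_sub_ge _ _ _ _ _ _ _ _ _ _ _ (by norm_num) (by norm_num) (by norm_num) (by norm_num))
    fin_cases i <;> fin_cases j
    exacts [absurd rfl hij, d01, d02, d03, d04, d05, d06, d01.symm, absurd rfl hij, d12, d13, d14, d15, d16, d02.symm, d12.symm, absurd rfl hij, d23, d24, d25, d26, d03.symm, d13.symm, d23.symm, absurd rfl hij, d34, d35, d36, d04.symm, d14.symm, d24.symm, d34.symm, absurd rfl hij, d45, d46, d05.symm, d15.symm, d25.symm, d35.symm, d45.symm, absurd rfl hij, d56, d06.symm, d16.symm, d26.symm, d36.symm, d46.symm, d56.symm, absurd rfl hij]
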